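/- Let x = ∑_{i=1}^n ω^{α_i}·a_i and y = ∑_{j=1}^m ω^{β_j}·b_j be nonzero ordinals in Cantor normal form. Then the ordinal product x·y is given by: (1) if β_m > 0 then x·y = ∑_{j=1}^m ω^{α_1+β_j}·b_j; (2) if β_m = 0 and m > 1 then x·y = ∑_{j=1}^{m-1} ω^{α_1+β_j}·b_j + ω^{α_1}·(a_1·b_m) + ∑_{i=2}^n ω^{α_i}·a_i; (3) if β_m = 0 and m = 1 then x·y = ω^{α_1}·(a_1·b_1) + ∑_{i=2}^n ω^{α_i}·a_i. -/

import Mathlib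

/-!
Write `x = ω^α₀·a₀ + t` with `t < ω^α₀`, so that `ω^α₀ ≤ x < ω^(α₀+1)`. Multiplying such an `x`
by `ω` keeps only its leading exponent, `x·ω = ω^(α₀+1)`, hence
`x·ω^β = ω^(α₀+β)` for `β > 0`. By left distributivity, each term `ω^β_j·b_j` of `y` with
`β_j > 0` therefore contributes `ω^(α₀+β_j)·b_j`. A finite last term `b` contributes
`x·b = ω^α₀·(a₀·b) + t`, because each `t` is absorbed by the next copy of `ω^α₀·a₀`.
-/

open Ordinal

/-- The value of a Cantor normal form expression `∑_{i<n} ω^(α i) · (a i)`,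
with the summands added in order of increasing index. -/
noncomputable def CNFsum (n : ℕ) (α : ℕ → Ordinal) (a : ℕ → ℕ) : Ordinal :=
  ((List.range n).map fun i => ω ^ α i * (a i : Ordinal)).sum

open Order

lemma CNFsum_succ (k : ℕ) (α : ℕ → Ordinal) (a : ℕ → ℕ) :
    CNFsum (k + 1) α a = CNFsum k α a + ω ^ α k * (a k : Ordinal) := by
  simp [CNFsum, List.range_succ]

lemma CNFsum_succ' (k : ℕ) (α : ℕ → Ordinal) (a : ℕ → ℕ) :
    CNFsum (k + 1) α a =
      ω ^ α 0 * (a 0 : Ordinal) + CNFsum k (fun i => α (i + 1)) (fun i => a (i + 1)) := by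
  simp [CNFsum, List.range_succ_eq_map, List.map_map, Function.comp_def]

lemma CNFsum_lt_omega0_opow {k : ℕ} {α : ℕ → Ordinal} (a : ℕ → ℕ) {γ : Ordinal}
    (h : ∀ i < k, α i < γ) : CNFsum k α a < ω ^ γ := by
  induction k with
  | zero => simpa [CNFsum] using opow_pos γ omega0_pos
  | succ k ih =>
    rw [CNFsum_succ]
    exact isPrincipal_add_omega0_opow γ (ih fun i hi => h i (by omega))
      (opow_mul_lt_opow (natCast_lt_omega0 _) (h k k.lt_succ_self))

section LeadingTerm

variable {γ t : Ordinal} {A : ℕ}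

lemma omega0_opow_le_mul_natCast (hA : 0 < A) : ω ^ γ ≤ ω ^ γ * A :=
  le_mul_of_one_le_right' (by exact_mod_cast hA)

lemma omega0_opow_mul_natCast_add_lt (ht : t < ω ^ γ) : ω ^ γ * A + t < ω ^ succ γ :=
  opow_mul_add_lt_opow (natCast_lt_omega0 A) ht (lt_succ γ)

lemma omega0_opow_mul_natCast_add_mul_natCast (hA : 0 < A) (ht : t < ω ^ γ) {b : ℕ}
    (hb : 0 < b) : (ω ^ γ * A + t) * b = ω ^ γ * ((A * b : ℕ) : Ordinal) + t := by
  induction b, hb using Nat.le_induction with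
  | base => simp
  | succ b _ ih =>
    have habsorb : t + ω ^ γ * A = ω ^ γ * A :=
      add_of_omega0_opow_le ht (omega0_opow_le_mul_natCast hA)
    calc (ω ^ γ * A + t) * ((b + 1 : ℕ) : Ordinal)
        = ω ^ γ * ((A * b : ℕ) : Ordinal) + (t + ω ^ γ * A) + t := by
          rw [Nat.cast_succ, mul_add_one, ih, add_assoc, add_assoc, add_assoc]
      _ = ω ^ γ * ((A * (b + 1) : ℕ) : Ordinal) + t := by
          rw [habsorb, ← mul_add]
          push_cast
          rw [mul_add_one]

end LeadingTerm

section LeadingExponent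

variable {x γ : Ordinal}

lemma mul_omega0_of_le_of_lt (h₁ : ω ^ γ ≤ x) (h₂ : x < ω ^ succ γ) : x * ω = ω ^ succ γ := by
  obtain ⟨n, hn⟩ := lt_omega0_opow_succ.1 h₂
  have hn0 : 0 < n := Nat.pos_of_ne_zero <| by rintro rfl; simp at hn
  apply le_antisymm
  · calc x * ω ≤ ω ^ γ * n * ω := by gcongr
      _ = ω ^ succ γ := by rw [mul_assoc, natCast_mul_omega0 hn0, opow_succ]
  · rw [opow_succ]
    gcongr

lemma mul_omega0_opow_of_le_of_lt (h₁ : ω ^ γ ≤ x) (h₂ : x < ω ^ succ γ) {β : Ordinal}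
    (hβ : 0 < β) : x * ω ^ β = ω ^ (γ + β) := by
  obtain ⟨δ, rfl⟩ : ∃ δ, β = 1 + δ :=
    ⟨β - 1, (Ordinal.add_sub_cancel_of_le (one_le_iff_pos.2 hβ)).symm⟩
  rw [opow_add, opow_one, ← mul_assoc, mul_omega0_of_le_of_lt h₁ h₂, ← opow_add,
    ← add_assoc, succ_eq_add_one]

lemma mul_CNFsum_of_pos (h₁ : ω ^ γ ≤ x) (h₂ : x < ω ^ succ γ) {k : ℕ} {β : ℕ → Ordinal}
    (b : ℕ → ℕ) (hβ : ∀ j < k, 0 < β j) : x * CNFsum k β b = CNFsum k (fun j => γ + β j) b := by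
  induction k generalizing β b with
  | zero => simp [CNFsum]
  | succ k ih =>
    rw [CNFsum_succ', CNFsum_succ', mul_add, ← mul_assoc,
      mul_omega0_opow_of_le_of_lt h₁ h₂ (hβ 0 k.succ_pos),
      ih (fun i => b (i + 1)) (fun j hj => hβ (j + 1) (by omega))]

end LeadingExponent

/-- Multiplication of two nonzero ordinals given in Cantor normal form, by cases on whether the
last exponent `β (m-1)` of `y` is zero. -/
theorem cnf_mul (n m : ℕ) (hn : 1 ≤ n) (hm : 1 ≤ m)
    (α β : ℕ → Ordinal) (a b : ℕ → ℕ)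
    (hα : ∀ i j, i < j → j < n → α j < α i)
    (hβ : ∀ i j, i < j → j < m → β j < β i)
    (ha : ∀ i, i < n → 0 < a i) (hb : ∀ j, j < m → 0 < b j) :
    -- (1)
    (0 < β (m - 1) →
      CNFsum n α a * CNFsum m β b = CNFsum m (fun j => α 0 + β j) b) ∧
    -- (2)
    (β (m - 1) = 0 → 1 < m →
      CNFsum n α a * CNFsum m β b =
        CNFsum (m - 1) (fun j => α 0 + β j) b +
          (ω ^ α 0 * ((a 0 * b (m - 1) : ℕ) : Ordinal) +
            CNFsum (n - 1) (fun i => α (i + 1)) (fun i => a (i + 1)))) ∧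
    -- (3)
    (β (m - 1) = 0 → m = 1 →
      CNFsum n α a * CNFsum m β b =
        ω ^ α 0 * ((a 0 * b 0 : ℕ) : Ordinal) +
          CNFsum (n - 1) (fun i => α (i + 1)) (fun i => a (i + 1))) := by
  obtain ⟨n, rfl⟩ : ∃ k, n = k + 1 := ⟨n - 1, by omega⟩
  obtain ⟨m, rfl⟩ : ∃ k, m = k + 1 := ⟨m - 1, by omega⟩
  simp only [Nat.add_sub_cancel]
  set t := CNFsum n (fun i => α (i + 1)) (fun i => a (i + 1))
  have hx : CNFsum (n + 1) α a = ω ^ α 0 * (a 0 : Ordinal) + t := CNFsum_succ' n α a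
  have ht : t < ω ^ α 0 := CNFsum_lt_omega0_opow _ fun i hi => hα 0 (i + 1) i.succ_pos (by omega)
  have hA : 0 < a 0 := ha 0 n.succ_pos
  have h₁ : ω ^ α 0 ≤ CNFsum (n + 1) α a := hx ▸ (omega0_opow_le_mul_natCast hA).trans le_self_add
  have h₂ : CNFsum (n + 1) α a < ω ^ succ (α 0) := hx ▸ omega0_opow_mul_natCast_add_lt ht
  have hlast : β m = 0 → CNFsum (n + 1) α a * CNFsum (m + 1) β b =
      CNFsum m (fun j => α 0 + β j) b + (ω ^ α 0 * ((a 0 * b m : ℕ) : Ordinal) + t) := by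
    intro h0
    rw [CNFsum_succ m β b, h0, opow_zero, one_mul, mul_add,
      mul_CNFsum_of_pos h₁ h₂ b fun j hj => h0 ▸ hβ j m hj m.lt_succ_self, hx,
      omega0_opow_mul_natCast_add_mul_natCast hA ht (hb m m.lt_succ_self)]
  refine ⟨fun hpos => ?_, fun h0 _ => hlast h0, fun h0 hm1 => ?_⟩
  · refine mul_CNFsum_of_pos h₁ h₂ b fun j hj => ?_
    rcases Nat.lt_succ_iff_lt_or_eq.1 hj with hj | rfl
    exacts [hpos.trans (hβ j m hj m.lt_succ_self), hpos]
  · obtain rfl : m = 0 := by omega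
    simpa [CNFsum] using hlast h0
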